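/- arXiv:1711.09771 — 6 statements merged into one kernel-verified Lean document; each statement's English description precedes it below -/
import Mathlib

section
/- Let A be a k-algebra and τ: A → M_d(B) an injective algebra homomorphism to a matrix ring over a commutative integral domain B, such that each idempotent e_i (i = 1,…,d) maps to the diagonal matrix unit e_{ii}, and every element of e_j A e_i maps into B·e_{ji}. Then A is cancellative: for all p, q ∈ e_j A e_i and r ∈ e_k A e_j with rp = rq ≠ 0, one has p = q; similarly pr = qr ≠ 0 implies p = q. -/
/-!
Under the impression every corner element `x ∈ e_j A e_i` is recorded by a single scalar: `τ x = b • E_{ji}`.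
Matrix units multiply as `E_{lj} E_{ji} = E_{li}`, so `rp = rq` becomes `c a = c b` in `B`, where `c ≠ 0`
because `r ≠ 0` and `τ` is injective; cancellation in the domain `B` and injectivity of `τ` give `p = q`.
-/

open Function Matrix

theorem Matrix.single_injective {m n α : Type*} [DecidableEq m] [DecidableEq n] [Zero α]
    (i : m) (j : n) : Injective (single i j : α → Matrix m n α) := fun a b h => by
  simpa only [single_apply_same] using congr_fun₂ h i j

section SingleImpression

variable {A B n F : Type*} [Ring A] [CommRing B] [Fintype n] [DecidableEq n]
  [FunLike F A (Matrix n n B)] [RingHomClass F A (Matrix n n B)] {τ : F}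

theorem ne_zero_of_map_eq_single (hinj : Injective τ) {x : A} {i j : n} {c : B}
    (hx : τ x = single i j c) (h0 : x ≠ 0) : c ≠ 0 := by
  rintro rfl
  exact h0 (hinj (by rw [hx, single_zero, map_zero]))

variable [IsDomain B]

theorem eq_of_mul_left_eq_of_map_eq_single (hinj : Injective τ) {p q r : A} {i j l : n}
    {a b c : B} (hp : τ p = single j i a) (hq : τ q = single j i b) (hr : τ r = single l j c)
    (h : r * p = r * q) (h0 : r * p ≠ 0) : p = q := by
  have hc : c ≠ 0 := ne_zero_of_map_eq_single hinj hr (left_ne_zero_of_mul h0)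
  have hrp : τ (r * p) = single l i (c * a) := by rw [map_mul, hr, hp, single_mul_single_same]
  have hrq : τ (r * q) = single l i (c * b) := by rw [map_mul, hr, hq, single_mul_single_same]
  have hab : a = b := mul_left_cancel₀ hc (single_injective l i (by rw [← hrp, ← hrq, h]))
  exact hinj (by rw [hp, hq, hab])

theorem eq_of_mul_right_eq_of_map_eq_single (hinj : Injective τ) {p q r : A} {i j l : n}
    {a b c : B} (hp : τ p = single j i a) (hq : τ q = single j i b) (hr : τ r = single i l c)
    (h : p * r = q * r) (h0 : p * r ≠ 0) : p = q := by
  have hc : c ≠ 0 := ne_zero_of_map_eq_single hinj hr (right_ne_zero_of_mul h0)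
  have hpr : τ (p * r) = single j l (a * c) := by rw [map_mul, hp, hr, single_mul_single_same]
  have hqr : τ (q * r) = single j l (b * c) := by rw [map_mul, hq, hr, single_mul_single_same]
  have hab : a = b := mul_right_cancel₀ hc (single_injective j l (by rw [← hpr, ← hqr, h]))
  exact hinj (by rw [hp, hq, hab])

end SingleImpression

theorem stmt_4_general {k B A : Type} [Field k] [CommRing B] [IsDomain B] [Algebra k B]
    [Ring A] [Algebra k A] {d : ℕ}
    (τ : A →ₐ[k] Matrix (Fin d) (Fin d) B) (hinj : Function.Injective τ)
    (e : Fin d → A)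
    (hcorner : ∀ (i j : Fin d) (x : A), e j * x * e i = x →
      ∃ b : B, τ x = Matrix.single j i b) :
    ∀ (i j l : Fin d) (p q r : A),
      e j * p * e i = p → e j * q * e i = q →
      ((e l * r * e j = r ∧ r * p = r * q ∧ r * p ≠ 0) ∨
       (e i * r * e l = r ∧ p * r = q * r ∧ p * r ≠ 0)) → p = q := by
  intro i j l p q r hp hq hcase
  obtain ⟨a, hpa⟩ := hcorner i j p hp
  obtain ⟨b, hqb⟩ := hcorner i j q hq
  rcases hcase with ⟨hr, h, h0⟩ | ⟨hr, h, h0⟩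
  · obtain ⟨c, hrc⟩ := hcorner j l r hr
    exact eq_of_mul_left_eq_of_map_eq_single hinj hpa hqb hrc h h0
  · obtain ⟨c, hrc⟩ := hcorner l i r hr
    exact eq_of_mul_right_eq_of_map_eq_single hinj hpa hqb hrc h h0

/-- A k-algebra admitting an injective algebra homomorphism (impression)
τ : A → M_d(B) over a commutative integral domain B, with τ(e_i) = e_{ii} and
τ(e_j A e_i) ⊆ B·e_{ji}, is cancellative: rp = rq ≠ 0 implies p = q, and
pr = qr ≠ 0 implies p = q. -/
theorem stmt_4 {k B A : Type} [Field k] [CommRing B] [IsDomain B] [Algebra k B]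
    [Ring A] [Algebra k A] {d : ℕ}
    (τ : A →ₐ[k] Matrix (Fin d) (Fin d) B) (hinj : Function.Injective τ)
    (e : Fin d → A)
    (he : ∀ i, τ (e i) = Matrix.single i i 1)
    (hcorner : ∀ (i j : Fin d) (x : A), e j * x * e i = x →
      ∃ b : B, τ x = Matrix.single j i b) :
    ∀ (i j l : Fin d) (p q r : A),
      e j * p * e i = p → e j * q * e i = q →
      ((e l * r * e j = r ∧ r * p = r * q ∧ r * p ≠ 0) ∨
       (e i * r * e l = r ∧ p * r = q * r ∧ p * r ≠ 0)) → p = q :=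
  stmt_4_general τ hinj e hcorner
end

section
/- Let A be a k-algebra with a complete set of orthogonal idempotents e_1,…,e_n, and suppose there is an injective algebra homomorphism τ: A → M_n(B) to a matrix ring over a commutative integral domain B with τ(e_i) = e_{ii}, τ(e_j A e_i) ⊆ B·e_{ji}, and such that for all i, j there exists a nonzero element r ∈ e_j A e_i (connectivity). Then A is a prime ring: for nonzero p ∈ e_j A e_i and q ∈ e_ℓ A e_k, we have q A p ≠ 0. -/
/-!
Under `τ` a nonzero element of a corner `e_j A e_i` becomes a single-entry matrix `b • E_{ji}`
with `b ≠ 0` (by injectivity), so products of corner elements along matching indices map to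
single-entry matrices whose entry is a product of nonzero elements of the domain `B`.
Given `p ∈ e_j A e_i` and `q ∈ e_l A e_m`, connectivity supplies a nonzero `r ∈ e_m A e_j`,
and then `τ (q * r * p)` is a nonzero multiple of `E_{li}`.
-/

section SingleEntry

variable {R A B n : Type*} [CommSemiring R] [Semiring A] [Algebra R A] [Semiring B]
  [Algebra R B] [Fintype n] [DecidableEq n] {τ : A →ₐ[R] Matrix n n B}

theorem ne_zero_of_map_eq_single_s5 (hinj : Function.Injective τ) {x : A} {a b : n} {c : B}
    (hx : τ x = Matrix.single a b c) (hx0 : x ≠ 0) : c ≠ 0 := by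
  rintro rfl
  exact hx0 (hinj (by rw [hx, map_zero, Matrix.single_zero]))

theorem mul_ne_zero_of_map_eq_single [NoZeroDivisors B] (hinj : Function.Injective τ)
    {x y : A} {a b d : n} {c c' : B}
    (hx : τ x = Matrix.single a b c) (hy : τ y = Matrix.single b d c')
    (hx0 : x ≠ 0) (hy0 : y ≠ 0) : x * y ≠ 0 := by
  intro hxy
  have hsingle : Matrix.single a d (c * c') = 0 := by
    rw [← Matrix.single_mul_single_same (c := c) a b d c', ← hx, ← hy, ← map_mul, hxy, map_zero]
  have hentry := congrFun (congrFun hsingle a) d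
  rw [Matrix.single_apply_same, Matrix.zero_apply] at hentry
  exact mul_ne_zero (ne_zero_of_map_eq_single_s5 hinj hx hx0)
    (ne_zero_of_map_eq_single_s5 hinj hy hy0) hentry

end SingleEntry

theorem stmt_5_general {k B A : Type} [Field k] [CommRing B] [IsDomain B] [Algebra k B]
    [Ring A] [Algebra k A] {n : ℕ}
    (τ : A →ₐ[k] Matrix (Fin n) (Fin n) B) (hinj : Function.Injective τ)
    (e : Fin n → A)
    (hcorner : ∀ (i j : Fin n) (x : A), e j * x * e i = x →
      ∃ b : B, τ x = Matrix.single j i b)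
    (hconn : ∀ i j : Fin n, ∃ r : A, e j * r * e i = r ∧ r ≠ 0) :
    ∀ (i j m l : Fin n) (p q : A),
      e j * p * e i = p → p ≠ 0 →
      e l * q * e m = q → q ≠ 0 →
      ∃ a : A, q * a * p ≠ 0 := by
  intro i j m l p q hp hp0 hq hq0
  obtain ⟨r, hr, hr0⟩ := hconn j m
  obtain ⟨α, hα⟩ := hcorner i j p hp
  obtain ⟨ρ, hρ⟩ := hcorner j m r hr
  obtain ⟨β, hβ⟩ := hcorner m l q hq
  have hqr : τ (q * r) = Matrix.single l j (β * ρ) := by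
    rw [map_mul, hβ, hρ, Matrix.single_mul_single_same]
  exact ⟨r, mul_ne_zero_of_map_eq_single hinj hqr hα
    (mul_ne_zero_of_map_eq_single hinj hβ hρ hq0 hr0) hp0⟩

/-- Homotopy algebras are prime: a k-algebra with a complete set of orthogonal
idempotents, an injective single-entry impression into a matrix ring over a
commutative integral domain, and connectivity (a nonzero element of e_j A e_i
for every pair i, j) satisfies: for nonzero p ∈ e_j A e_i and q ∈ e_ℓ A e_m,
q A p ≠ 0. -/
theorem stmt_5 {k B A : Type} [Field k] [CommRing B] [IsDomain B] [Algebra k B]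
    [Ring A] [Algebra k A] {n : ℕ}
    (τ : A →ₐ[k] Matrix (Fin n) (Fin n) B) (hinj : Function.Injective τ)
    (e : Fin n → A)
    (hid : ∀ i, e i * e i = e i)
    (horth : ∀ i j, i ≠ j → e i * e j = 0)
    (hsum : ∑ i, e i = 1)
    (he : ∀ i, τ (e i) = Matrix.single i i 1)
    (hcorner : ∀ (i j : Fin n) (x : A), e j * x * e i = x →
      ∃ b : B, τ x = Matrix.single j i b)
    (hconn : ∀ i j : Fin n, ∃ r : A, e j * r * e i = r ∧ r ≠ 0) :
    ∀ (i j m l : Fin n) (p q : A),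
      e j * p * e i = p → p ≠ 0 →
      e l * q * e m = q → q ≠ 0 →
      ∃ a : A, q * a * p ≠ 0 :=
  stmt_5_general τ hinj e hcorner hconn
end

section
/- Let η: kQ → M_n(k[x_D | D ∈ P]) be the algebra homomorphism determined by a dimer quiver Q on a torus, sending vertex e_i to e_{ii} and arrow a to (∏_{a ∈ D} x_D)·e_{h(a),t(a)}, where P is the set of perfect matchings. If p and q are paths such that pa and qa are both unit cycles for some arrow a, then η(p) = η(q). Consequently the superpotential ideal I = ⟨p − q | ∃ a with pa, qa unit cycles⟩ is contained in ker η. -/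
/-!
Under η̄ a path becomes the monomial `∏_D x_D ^ (number of its arrows lying in D)`. Since every
perfect matching `D` meets each of the unit cycles `a :: p` and `a :: q` exactly once, `p` and
`q` both meet `D` exactly `1 - [a ∈ D]` times, so the two monomials agree.
-/

theorem List.prod_map_prod_filter_eq_prod_pow_countP {α M R : Type*} [CommMonoid R] [Fintype M]
    [DecidableEq α] (S : M → Finset α) (f : M → R) (c : List α) :
    (c.map fun b => ∏ D ∈ Finset.univ.filter (fun D => b ∈ S D), f D).prod
      = ∏ D, f D ^ c.countP (fun b => decide (b ∈ S D)) := by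
  induction c with
  | nil => simp
  | cons b c ih =>
    rw [List.map_cons, List.prod_cons, ih, Finset.prod_filter, ← Finset.prod_mul_distrib]
    exact Finset.prod_congr rfl fun D _ => by
      by_cases h : b ∈ S D <;> simp [h, pow_succ, mul_comm]

theorem List.countP_eq_of_countP_cons_eq {α : Type*} (P : α → Bool) {a : α} {p q : List α}
    (h : (a :: p).countP P = (a :: q).countP P) : p.countP P = q.countP P := by
  simpa only [List.countP_cons, Nat.add_right_cancel_iff] using h

/-- For the perfect-matching homomorphism η of a dimer quiver (η̄ of a path is
the product over its arrows b of ∏_{b ∈ D} x_D), if pa and qa are both unit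
cycles (each perfect matching contains exactly one arrow of each unit cycle,
counted with multiplicity), then η̄(p) = η̄(q); hence the superpotential ideal
lies in ker η. -/
theorem stmt_6 {k Arrow M : Type} [Field k] [Fintype M] [DecidableEq Arrow]
    (matching : M → Finset Arrow)
    (unitCycles : Set (List Arrow))
    (hmatch : ∀ (D : M), ∀ c ∈ unitCycles,
      c.countP (fun x => decide (x ∈ matching D)) = 1)
    (a : Arrow) (p q : List Arrow)
    (hp : (a :: p) ∈ unitCycles) (hq : (a :: q) ∈ unitCycles) :
    ((p.map (fun b => ∏ D ∈ Finset.univ.filter (fun D => b ∈ matching D),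
        MvPolynomial.X D)).prod : MvPolynomial M k)
    = (q.map (fun b => ∏ D ∈ Finset.univ.filter (fun D => b ∈ matching D),
        MvPolynomial.X D)).prod := by
  simp only [List.prod_map_prod_filter_eq_prod_pow_countP]
  refine Finset.prod_congr rfl fun D _ => congrArg _ ?_
  exact List.countP_eq_of_countP_cons_eq _ ((hmatch D _ hp).trans (hmatch D _ hq).symm)
end

section
/- Let τ: Λ → M_n(B) be an injective algebra homomorphism from a k-algebra Λ with orthogonal idempotents e_i to a matrix ring over B = k[x_1,…,x_s], with τ(e_i) = e_{ii} and each arrow generator mapped to a nonzero monomial times a matrix unit. For each maximal ideal 𝔟 of B not containing the monomial σ = x_1⋯x_s (i.e., all coordinates nonzero), the composition Λ → M_n(B) → M_n(B/𝔟) ≅ M_n(k) is surjective, provided the quiver Q has a cycle passing through every vertex. -/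
/-!
Evaluating at a point with nonzero coordinates sends every arrow to a nonzero multiple of a
matrix unit, so the image of Λ contains the diagonal units `E_ii` and the units `E_{hd a, tl a}`.
Multiplying these along the paths supplied by strong connectivity gives every matrix unit
`E_ij`, and the matrix units span `M_n(k)`.
-/

open Matrix

theorem MvPolynomial.eval_monomial_ne_zero {σ R : Type*} [CommSemiring R] [NoZeroDivisors R]
    {v : σ → R} (hv : ∀ t, v t ≠ 0) (d : σ →₀ ℕ) {c : R} (hc : c ≠ 0) :
    eval v (monomial d c) ≠ 0 := by
  have := nontrivial_of_ne c 0 hc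
  rw [eval_monomial]
  exact mul_ne_zero hc (Finsupp.prod_ne_zero_iff.2 fun t _ => pow_ne_zero _ (hv t))

namespace Matrix

variable {n : Type*} [Fintype n] [DecidableEq n]

theorem subalgebra_eq_top_of_single_one_mem {R : Type*} [CommSemiring R]
    (S : Subalgebra R (Matrix n n R)) (h : ∀ i j, single i j (1 : R) ∈ S) : S = ⊤ := by
  refine eq_top_iff.2 fun M _ => ?_
  rw [matrix_eq_sum_single M]
  refine Subalgebra.sum_mem _ fun i _ => Subalgebra.sum_mem _ fun j _ => ?_
  simpa [smul_single] using S.smul_mem (h i j) (M i j)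

theorem single_one_mem_of_single_mem {K : Type*} [Field K] (S : Subalgebra K (Matrix n n K))
    {i j : n} {r : K} (hr : r ≠ 0) (h : single i j r ∈ S) : single i j (1 : K) ∈ S := by
  simpa [smul_single, hr] using S.smul_mem h r⁻¹

theorem single_one_mem_of_reflTransGen {R : Type*} [CommSemiring R]
    (S : Subalgebra R (Matrix n n R)) (hdiag : ∀ i, single i i (1 : R) ∈ S) {i j : n}
    (hpath : Relation.ReflTransGen (fun u v => single v u (1 : R) ∈ S) i j) :
    single j i (1 : R) ∈ S := by
  induction hpath with
  | refl => exact hdiag i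
  | tail _ hstep ih => simpa using S.mul_mem hstep ih

end Matrix

theorem stmt_14_general {k : Type} [Field k] {n s : ℕ}
    {Λ I : Type} [Ring Λ] [Algebra k Λ]
    (τ : Λ →ₐ[k] Matrix (Fin n) (Fin n) (MvPolynomial (Fin s) k))
    (e : Fin n → Λ) (ar : I → Λ) (hd tl : I → Fin n)
    (d : I → (Fin s →₀ ℕ)) (c : I → k)
    (he : ∀ i, τ (e i) = Matrix.single i i 1)
    (har : ∀ a, τ (ar a) =
      Matrix.single (hd a) (tl a) (MvPolynomial.monomial (d a) (c a)))
    (hc : ∀ a, c a ≠ 0)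
    (hconn : ∀ i j : Fin n,
      Relation.ReflTransGen (fun u v => ∃ a, tl a = u ∧ hd a = v) i j)
    (v : Fin s → k) (hv : ∀ t, v t ≠ 0) :
    Function.Surjective
      (fun x : Λ => (τ x).map (MvPolynomial.eval v)) := by
  set φ : Λ →ₐ[k] Matrix (Fin n) (Fin n) k := (MvPolynomial.aeval v).mapMatrix.comp τ
  have hφ : ∀ x, φ x = (τ x).map (MvPolynomial.eval v) := fun x => by simp [φ]
  have hdiag : ∀ i, single i i (1 : k) ∈ φ.range := fun i => ⟨e i, by simp [hφ, he]⟩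
  have harrow : ∀ a, single (hd a) (tl a) (1 : k) ∈ φ.range := fun a =>
    single_one_mem_of_single_mem _ (MvPolynomial.eval_monomial_ne_zero hv (d a) (hc a))
      ⟨ar a, by simp [hφ, har]⟩
  have hunits : ∀ i j, single j i (1 : k) ∈ φ.range := fun i j =>
    single_one_mem_of_reflTransGen _ hdiag <|
      Relation.ReflTransGen.mono (fun _ _ ⟨a, hu, hw⟩ => hu ▸ hw ▸ harrow a) _ _ (hconn i j)
  have hsurj : Function.Surjective φ := (AlgHom.range_eq_top φ).1 <|
    subalgebra_eq_top_of_single_one_mem _ fun i j => hunits j i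
  simpa only [← hφ] using hsurj

/-- Let τ : Λ → M_n(B) be an injective algebra homomorphism over
B = k[x_1,…,x_s], k algebraically closed, with τ(e_i) = e_{ii} and each arrow
sent to a nonzero monomial times a matrix unit. For each point v with all
coordinates nonzero (i.e., each maximal ideal of B not containing σ = x_1⋯x_s),
the composition Λ → M_n(B) → M_n(k) is surjective, provided the quiver is
strongly connected (it has a cycle passing through every vertex). -/
theorem stmt_14 {k : Type} [Field k] [IsAlgClosed k] {n s : ℕ}
    {Λ I : Type} [Ring Λ] [Algebra k Λ]
    (τ : Λ →ₐ[k] Matrix (Fin n) (Fin n) (MvPolynomial (Fin s) k))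
    (hinj : Function.Injective τ)
    (e : Fin n → Λ) (ar : I → Λ) (hd tl : I → Fin n)
    (d : I → (Fin s →₀ ℕ)) (c : I → k)
    (he : ∀ i, τ (e i) = Matrix.single i i 1)
    (har : ∀ a, τ (ar a) =
      Matrix.single (hd a) (tl a) (MvPolynomial.monomial (d a) (c a)))
    (hc : ∀ a, c a ≠ 0)
    (hgen : Algebra.adjoin k (Set.range e ∪ Set.range ar) = ⊤)
    (hconn : ∀ i j : Fin n,
      Relation.ReflTransGen (fun u v => ∃ a, tl a = u ∧ hd a = v) i j)
    (v : Fin s → k) (hv : ∀ t, v t ≠ 0) :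
    Function.Surjective
      (fun x : Λ => (τ x).map (MvPolynomial.eval v)) :=
  stmt_14_general τ e ar hd tl d c he har hc hconn v hv
end

section
/- Let Q be a dimer quiver on a torus with at least one perfect matching, and suppose Q contains a 2-cycle ab such that a or b appears as a subpath of the complementary unit cycle of the other. Then Q is degenerate: some arrow of Q is contained in no perfect matching. -/
/-- If two distinct elements of a list satisfy a decidable predicate, the
countP is at least 2. -/
lemma two_le_countP {α : Type} [DecidableEq α] {l : List α} {u v : α}
    (p : α → Bool) (hu : u ∈ l) (hv : v ∈ l) (huv : u ≠ v)
    (hpu : p u = true) (hpv : p v = true) : 2 ≤ l.countP p := by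
  have hu' : u ∈ l.filter p := List.mem_filter.mpr ⟨hu, hpu⟩
  have hv' : v ∈ l.filter p := List.mem_filter.mpr ⟨hv, hpv⟩
  have h2 : 2 ≤ (l.filter p).toFinset.card := by
    apply Finset.one_lt_card.mpr
    exact ⟨u, List.mem_toFinset.mpr hu', v, List.mem_toFinset.mpr hv', huv⟩
  calc 2 ≤ (l.filter p).toFinset.card := h2
    _ ≤ (l.filter p).length := List.toFinset_card_le _
    _ = l.countP p := (List.countP_eq_length_filter (p := p) (l := l)).symm

/-- A dimer quiver with a permanent 2-cycle is degenerate: if [a, b] is a unit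
2-cycle and the complementary unit cycle c containing a also contains b
together with a further arrow x ∉ {a, b}, then (even if Q has a perfect
matching) some arrow of Q lies in no perfect matching, where a perfect
matching is a set of arrows containing exactly one arrow (with multiplicity)
of each unit cycle. -/
theorem stmt_17 {Arrow : Type} [DecidableEq Arrow]
    (unitCycles : Set (List Arrow))
    (isPM : Finset Arrow → Prop)
    (hPM : ∀ D, isPM D ↔
      ∀ c ∈ unitCycles, c.countP (fun x => decide (x ∈ D)) = 1)
    (hex : ∃ D, isPM D)
    (a b x : Arrow) (hab : a ≠ b)
    (h2 : [a, b] ∈ unitCycles)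
    (c : List Arrow) (hc : c ∈ unitCycles)
    (hac : a ∈ c) (hbc : b ∈ c)
    (hxc : x ∈ c) (hxa : x ≠ a) (hxb : x ≠ b) :
    ∃ y : Arrow, ∀ D, isPM D → y ∉ D := by
  refine ⟨x, fun D hD hxD => ?_⟩
  have hD' := (hPM D).mp hD
  have h2c := hD' _ h2
  have hcc := hD' _ hc
  -- from the 2-cycle, a ∈ D or b ∈ D
  have hab' : a ∈ D ∨ b ∈ D := by
    by_contra h
    push_neg at h
    simp [List.countP_cons, h.1, h.2] at h2c
  rcases hab' with h | h
  · have := two_le_countP (l := c) (fun y => decide (y ∈ D)) hxc hac hxa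
      (by simp [hxD]) (by simp [h])
    omega
  · have := two_le_countP (l := c) (fun y => decide (y ∈ D)) hxc hbc hxb
      (by simp [hxD]) (by simp [h])
    omega
end

section
/- Let η: A → M_n(k[x_D | D ∈ P]) be the perfect-matching homomorphism of a dimer algebra A with P nonempty, and let p, q ∈ e_j A e_i be distinct paths whose lifts to the universal cover have coincident tails and coincident heads. If η̄(p) = η̄(q), then p, q form a non-cancellative pair: there exists m ≥ 0 such that p·σ_i^m = q·σ_i^m ≠ 0. -/
/-!
Applying `η` to `p σᵢ^m = q σᵢ^m'` gives `bp σ^m = bp σ^m'` in the domain `k[x_D]`, so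
`σ^m = σ^m'`; as `σ` is the monomial with all exponents `1` and `P ≠ ∅`, this forces `m = m'`.
-/

namespace Matrix

variable {l n α : Type*} [DecidableEq l] [DecidableEq n]

theorem single_inj [Zero α] {i : l} {j : n} {a b : α} :
    single i j a = single i j b ↔ a = b :=
  ⟨fun h => by simpa using congrFun₂ h i j, congrArg _⟩

theorem single_mul_single_same_pow [Fintype n] [Semiring α] (j : l) (i : n) (b c : α) (t : ℕ) :
    single j i b * single i i c ^ t = single j i (b * c ^ t) := by
  induction t with
  | zero => simp
  | succ t ih =>
    rw [pow_succ, ← Matrix.mul_assoc, ih, single_mul_single_same, pow_succ, _root_.mul_assoc]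

end Matrix

namespace MvPolynomial

variable {σ R : Type*} [Fintype σ] [CommSemiring R]

theorem prod_X_eq_monomial :
    (∏ D, X D : MvPolynomial σ R) = monomial (∑ D, Finsupp.single D 1) 1 :=
  (monomial_sum_one _ _).symm

theorem pow_prod_X_injective [Nonempty σ] [Nontrivial R] :
    Function.Injective fun m : ℕ => (∏ D, X D : MvPolynomial σ R) ^ m := by
  intro m m' h
  obtain ⟨D⟩ := ‹Nonempty σ›
  simp only [prod_X_eq_monomial, monomial_pow, one_pow, monomial_left_inj one_ne_zero] at h
  simpa [Finsupp.finsetSum_apply, Finsupp.single_apply] using DFunLike.congr_fun h D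

end MvPolynomial

theorem stmt_18_general {k A P : Type} [Field k] [Fintype P] [Nonempty P]
    [Ring A] [Algebra k A] {n : ℕ}
    (η : A →ₐ[k] Matrix (Fin n) (Fin n) (MvPolynomial P k))
    (i j : Fin n) (σi p q : A) (bp : MvPolynomial P k)
    (hσ : η σi = Matrix.single i i (∏ D : P, MvPolynomial.X D))
    (hp : η p = Matrix.single j i bp)
    (hbp : bp ≠ 0)
    (hηeq : η p = η q)
    (hlift : ∃ m nn : ℕ, p * σi ^ m = q * σi ^ nn) :
    ∃ m : ℕ, p * σi ^ m = q * σi ^ m ∧ p * σi ^ m ≠ 0 := by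
  obtain ⟨m, m', hmm'⟩ := hlift
  have hη_mul_pow (r : A) (t : ℕ) (hr : η r = Matrix.single j i bp) :
      η (r * σi ^ t) = Matrix.single j i (bp * (∏ D : P, MvPolynomial.X D) ^ t) := by
    rw [map_mul, map_pow, hr, hσ, Matrix.single_mul_single_same_pow]
  have hm : m = m' := by
    have h := congrArg η hmm'
    rw [hη_mul_pow p m hp, hη_mul_pow q m' (hηeq ▸ hp), Matrix.single_inj] at h
    exact MvPolynomial.pow_prod_X_injective (mul_left_cancel₀ hbp h)
  subst hm
  refine ⟨m, hmm', fun h0 => ?_⟩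
  have h := hη_mul_pow p m hp
  rw [h0, map_zero, ← Matrix.single_zero j i, Matrix.single_inj] at h
  have hσ0 : (∏ D : P, MvPolynomial.X D : MvPolynomial P k) ≠ 0 :=
    Finset.prod_ne_zero_iff.mpr fun D _ => MvPolynomial.X_ne_zero D
  exact mul_ne_zero hbp (pow_ne_zero m hσ0) h.symm

/-- If P ≠ ∅ and p, q are distinct paths (with η̄(p) ≠ 0) whose lifts have
coincident tails and heads (so that p·σ_i^m = q·σ_i^n for some m, n ≥ 0) and
η(p) = η(q), then p, q is a non-cancellative pair: there is m ≥ 0 with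
p·σ_i^m = q·σ_i^m ≠ 0. -/
theorem stmt_18 {k A P : Type} [Field k] [Fintype P] [Nonempty P]
    [Ring A] [Algebra k A] {n : ℕ}
    (η : A →ₐ[k] Matrix (Fin n) (Fin n) (MvPolynomial P k))
    (i j : Fin n) (σi p q : A) (bp : MvPolynomial P k)
    (hσ : η σi = Matrix.single i i (∏ D : P, MvPolynomial.X D))
    (hp : η p = Matrix.single j i bp)
    (hbp : bp ≠ 0)
    (hpq : p ≠ q)
    (hηeq : η p = η q)
    (hlift : ∃ m nn : ℕ, p * σi ^ m = q * σi ^ nn) :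
    ∃ m : ℕ, p * σi ^ m = q * σi ^ m ∧ p * σi ^ m ≠ 0 :=
  stmt_18_general η i j σi p q bp hσ hp hbp hηeq hlift
end
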